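/- arXiv:0710.1784 — 6 statements merged into one kernel-verified Lean document; each statement's English description precedes it below -/
import Mathlib

section
/- The treedoc path order coincides with infix traversal: for any binary tree with nodes labeled by their paths, path p precedes path q in the infix (in-order) enumeration of the tree's nodes if and only if p < q in the treedoc path order. -/
/-!
Reading a path `b₁ … bₙ` as the dyadic number `∑ ±2⁻ⁱ` (`+` for a right turn, `-` for a left
turn) places every node strictly between the nodes of its left and of its right subtree, so
`tlt` is asymmetric. In the infix enumeration of a subtree rooted at `pre`, the left subtree's
paths extend `pre ++ [false]` and the right subtree's extend `pre ++ [true]`, so the three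
clauses of `tlt` cover the three kinds of ordered pairs (left–root, root–right, left–right) and
the enumeration is strictly sorted by `tlt`.
-/

def tlt (p q : List Bool) : Prop :=
  (∃ r, q = p ++ true :: r) ∨
  (∃ r, p = q ++ false :: r) ∨
  (∃ c r1 r2, p = c ++ false :: r1 ∧ q = c ++ true :: r2)

/-- Binary trees with an optional payload at each node. -/
inductive BTree (A : Type) : Type
  | leaf : BTree A
  | node : BTree A → Option A → BTree A → BTree A

/-- Infix (in-order) enumeration of the paths of the nodes of a tree,
    `pre` being the path of the root. -/
def infixPaths {A : Type} : BTree A → List Bool → List (List Bool)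
  | .leaf, _ => []
  | .node l _ r, pre =>
      infixPaths l (pre ++ [false]) ++ [pre] ++ infixPaths r (pre ++ [true])

theorem List.Pairwise.pair_sublist {α : Type*} {R : α → α → Prop} [Std.Antisymm R] {l : List α}
    {a b : α} (hl : l.Pairwise R) (ha : a ∈ l) (hb : b ∈ l) (hne : a ≠ b) (hab : R a b) :
    [a, b].Sublist l :=
  sublist_of_subperm_of_pairwise (subperm_of_subset (by simpa using hne) (by simp [ha, hb]))
    (by simpa using hab) hl

def pathValue : List Bool → ℚ
  | [] => 0
  | b :: r => (if b then 1 else -1) / 2 + pathValue r / 2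

theorem pathValue_mem_Ioo (p : List Bool) : pathValue p ∈ Set.Ioo (-1) 1 := by
  induction p with
  | nil => norm_num [pathValue]
  | cons b r ih =>
    obtain ⟨h₁, h₂⟩ := ih
    cases b <;> constructor <;> simp only [pathValue] <;> norm_num <;> linarith

theorem pathValue_append_false_lt (c r : List Bool) :
    pathValue (c ++ false :: r) < pathValue c := by
  induction c with
  | nil =>
    simp only [List.nil_append, pathValue, Bool.false_eq_true, ↓reduceIte]
    linarith [(pathValue_mem_Ioo r).2]
  | cons b c ih => simp only [List.cons_append, pathValue]; linarith

theorem pathValue_lt_append_true (c r : List Bool) : pathValue c < pathValue (c ++ true :: r) := by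
  induction c with
  | nil =>
    simp only [List.nil_append, pathValue, ↓reduceIte]
    linarith [(pathValue_mem_Ioo r).1]
  | cons b c ih => simp only [List.cons_append, pathValue]; linarith

theorem pathValue_lt_of_tlt {p q : List Bool} (h : tlt p q) : pathValue p < pathValue q := by
  rcases h with ⟨r, rfl⟩ | ⟨r, rfl⟩ | ⟨c, r₁, r₂, rfl, rfl⟩
  · exact pathValue_lt_append_true p r
  · exact pathValue_append_false_lt q r
  · exact (pathValue_append_false_lt c r₁).trans (pathValue_lt_append_true c r₂)

instance : Std.Asymm tlt :=
  ⟨fun _ _ h h' => (pathValue_lt_of_tlt h).asymm (pathValue_lt_of_tlt h')⟩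

instance : Std.Antisymm tlt := Std.Asymm.antisymm tlt

theorem exists_eq_append_of_mem_infixPaths {A : Type} {t : BTree A} {pre x : List Bool}
    (hx : x ∈ infixPaths t pre) : ∃ s, x = pre ++ s := by
  induction t generalizing pre with
  | leaf => simp [infixPaths] at hx
  | node l _ r ihl ihr =>
    simp only [infixPaths, List.mem_append, List.mem_singleton] at hx
    rcases hx with (hx | rfl) | hx
    · obtain ⟨s, rfl⟩ := ihl hx
      exact ⟨false :: s, by simp⟩
    · exact ⟨[], by simp⟩
    · obtain ⟨s, rfl⟩ := ihr hx
      exact ⟨true :: s, by simp⟩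

theorem infixPaths_pairwise_tlt {A : Type} (t : BTree A) (pre : List Bool) :
    (infixPaths t pre).Pairwise tlt := by
  induction t generalizing pre with
  | leaf => simp [infixPaths]
  | node l _ r ihl ihr =>
    simp only [infixPaths, List.pairwise_append, List.pairwise_singleton, List.mem_append,
      List.mem_singleton]
    refine ⟨⟨ihl _, trivial, ?left_root⟩, ihr _, ?_⟩
    case left_root =>
      rintro a ha _ rfl
      obtain ⟨s, rfl⟩ := exists_eq_append_of_mem_infixPaths ha
      exact Or.inr (Or.inl ⟨s, by simp⟩)
    rintro a (ha | rfl) b hb <;> obtain ⟨s', rfl⟩ := exists_eq_append_of_mem_infixPaths hb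
    · obtain ⟨s, rfl⟩ := exists_eq_append_of_mem_infixPaths ha
      exact Or.inr (Or.inr ⟨pre, s, s', by simp, by simp⟩)
    · exact Or.inl ⟨s', by simp⟩

/-- The treedoc path order coincides with infix traversal order. -/
theorem tlt_iff_infix {A : Type} (t : BTree A) (p q : List Bool)
    (hp : p ∈ infixPaths t []) (hq : q ∈ infixPaths t []) (hne : p ≠ q) :
    [p, q].Sublist (infixPaths t []) ↔ tlt p q := by
  have hsorted := infixPaths_pairwise_tlt t []
  exact ⟨fun h => List.pairwise_iff_forall_sublist.mp hsorted h,
    hsorted.pair_sublist hp hq hne⟩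
end

section
/- The treedoc path order is dense in the sense required for identifier generation: for any two paths p < q, the path N produced by the rule (if p is an ancestor of q, take N = q ++ [0]; if q is an ancestor of p, take N = p ++ [1]; otherwise take N = p ++ [1]) satisfies p < N, and in the first two cases also N < q. -/
/-- `p` is an ancestor of `q`: `p` is a proper prefix of `q`. -/
def ancestor (p q : List Bool) : Prop := ∃ r, r ≠ [] ∧ q = p ++ r

theorem ancestor.length_lt {p q : List Bool} (h : ancestor p q) : p.length < q.length := by
  obtain ⟨r, hr, rfl⟩ := h
  simpa using List.length_pos_iff.mpr hr

theorem ancestor.asymm {p q : List Bool} (h : ancestor p q) : ¬ ancestor q p :=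
  fun h' => lt_asymm h.length_lt h'.length_lt

theorem tlt_self_append_true (p : List Bool) : tlt p (p ++ [true]) :=
  Or.inl ⟨[], rfl⟩

theorem tlt_append_false_self (q : List Bool) : tlt (q ++ [false]) q :=
  Or.inr (Or.inl ⟨[], rfl⟩)

theorem tlt_append_right_of_not_ancestor {p q : List Bool} (hpq : tlt p q)
    (hqp : ¬ ancestor q p) (s : List Bool) : tlt p (q ++ s) := by
  rcases hpq with ⟨r, rfl⟩ | ⟨r, rfl⟩ | ⟨c, r1, r2, rfl, rfl⟩
  · exact Or.inl ⟨r ++ s, by simp⟩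
  · exact absurd ⟨false :: r, List.cons_ne_nil _ _, rfl⟩ hqp
  · exact Or.inr (Or.inr ⟨c, r1, r2 ++ s, rfl, by simp⟩)

theorem tlt_append_left_of_not_ancestor {p q : List Bool} (hpq : tlt p q)
    (hpq' : ¬ ancestor p q) (s : List Bool) : tlt (p ++ s) q := by
  rcases hpq with ⟨r, rfl⟩ | ⟨r, rfl⟩ | ⟨c, r1, r2, rfl, rfl⟩
  · exact absurd ⟨true :: r, List.cons_ne_nil _ _, rfl⟩ hpq'
  · exact Or.inr (Or.inl ⟨r ++ s, by simp⟩)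
  · exact Or.inr (Or.inr ⟨c, r1 ++ s, r2, by simp, rfl⟩)

/-- The new-identifier rule produces a fresh path correctly placed between
    `p` and `q`. -/
theorem newuid_between (p q : List Bool) (hpq : tlt p q) :
    (ancestor p q → tlt p (q ++ [false]) ∧ tlt (q ++ [false]) q) ∧
    (ancestor q p → tlt p (p ++ [true]) ∧ tlt (p ++ [true]) q) ∧
    (¬ ancestor p q → ¬ ancestor q p → tlt p (p ++ [true])) :=
  ⟨fun h => ⟨tlt_append_right_of_not_ancestor hpq h.asymm _, tlt_append_false_self q⟩,
    fun h => ⟨tlt_self_append_true p, tlt_append_left_of_not_ancestor hpq h.asymm _⟩,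
    fun _ _ => tlt_self_append_true p⟩
end

section
/- Eventual consistency of CRDTs (convergence theorem): let V be a finite set of operations with a happens-before relation H (a strict partial order), and suppose any two H-incomparable (concurrent) operations commute as state transformers. Then any two enumerations of V that are linear extensions of H, applied sequentially to a common initial state, produce the same final state. -/
/-!
Induct on the first schedule. Its head `a` occurs somewhere in the second schedule, and every
operation `x` in front of it there is ordered before `a` by the second schedule and after `a`
by the first, so `x` and `a` are concurrent and commute. Hence `a` can be moved to the front of
the second schedule without changing the final state, and the tails are again two schedules of
the same operations.
-/

theorem List.foldl_append_cons_of_comp_comm {S ι : Type*} (f : ι → S → S) {a : ι}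
    {xs : List ι} (ys : List ι) (h : ∀ x ∈ xs, f a ∘ f x = f x ∘ f a) (s : S) :
    (xs ++ a :: ys).foldl (fun s i => f i s) s = (xs ++ ys).foldl (fun s i => f i s) (f a s) := by
  induction xs generalizing s with
  | nil => rfl
  | cons b xs ih =>
    rw [List.cons_append, List.foldl_cons, ih (fun x hx => h x (List.mem_cons_of_mem b hx)),
      List.cons_append, List.foldl_cons]
    exact congrArg (List.foldl _ · _) (congrFun (h b List.mem_cons_self) s)

theorem List.Perm.foldl_eq_of_pairwise {S ι : Type*} (f : ι → S → S) {r : ι → ι → Prop}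
    {l₁ l₂ : List ι} (hp : l₁.Perm l₂) (h₁ : l₁.Pairwise r) (h₂ : l₂.Pairwise r)
    (hcomm : ∀ i ∈ l₁, ∀ j ∈ l₁, r i j → r j i → f i ∘ f j = f j ∘ f i) (s : S) :
    l₁.foldl (fun s i => f i s) s = l₂.foldl (fun s i => f i s) s := by
  induction l₁ generalizing l₂ s with
  | nil => rw [hp.nil_eq]
  | cons a t ih =>
    obtain ⟨xs, ys, rfl⟩ := List.append_of_mem (hp.subset List.mem_cons_self)
    have hr_a : ∀ x ∈ t, r a x := (List.pairwise_cons.mp h₁).1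
    have hcomm_a : ∀ x ∈ xs, f a ∘ f x = f x ∘ f a := by
      intro x hx
      rcases List.mem_cons.mp (hp.symm.subset (List.mem_append_left _ hx)) with rfl | hxt
      · rfl
      · exact hcomm a List.mem_cons_self x (List.mem_cons_of_mem a hxt) (hr_a x hxt)
          ((List.pairwise_append.mp h₂).2.2 x hx a List.mem_cons_self)
    rw [List.foldl_append_cons_of_comp_comm f ys hcomm_a, List.foldl_cons]
    exact ih (hp.trans List.perm_middle).cons_inv (List.pairwise_cons.mp h₁).2
      (h₂.sublist ((List.sublist_cons_self a ys).append_left xs))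
      (fun i hi j hj => hcomm i (List.mem_cons_of_mem a hi) j (List.mem_cons_of_mem a hj)) _

theorem crdt_convergence_general {S ι : Type}
    (V : Finset ι) (f : ι → S → S) (hb : ι → ι → Prop)
    (hcomm : ∀ i ∈ V, ∀ j ∈ V, ¬ hb i j → ¬ hb j i →
      (f i) ∘ (f j) = (f j) ∘ (f i))
    (l1 l2 : List ι)
    (h1 : l1.Perm V.toList) (h2 : l2.Perm V.toList)
    (e1 : l1.Pairwise (fun i j => ¬ hb j i))
    (e2 : l2.Pairwise (fun i j => ¬ hb j i))
    (s0 : S) :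
    l1.foldl (fun s i => f i s) s0 = l2.foldl (fun s i => f i s) s0 := by
  have mem_V {i : ι} (hi : i ∈ l1) : i ∈ V := Finset.mem_toList.mp (h1.subset hi)
  refine (h1.trans h2.symm).foldl_eq_of_pairwise f e1 e2 ?_ s0
  exact fun i hi j hj hji hij => hcomm i (mem_V hi) j (mem_V hj) hij hji

/-- Eventual consistency of CRDTs: any two linear extensions of the
    happens-before order, applied from a common initial state, yield the
    same final state. -/
theorem crdt_convergence {S ι : Type} [DecidableEq ι]
    (V : Finset ι) (f : ι → S → S) (hb : ι → ι → Prop)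
    (hirr : ∀ i, ¬ hb i i)
    (htrans : ∀ i j k, hb i j → hb j k → hb i k)
    (hcomm : ∀ i ∈ V, ∀ j ∈ V, ¬ hb i j → ¬ hb j i →
      (f i) ∘ (f j) = (f j) ∘ (f i))
    (l1 l2 : List ι)
    (h1 : l1.Perm V.toList) (h2 : l2.Perm V.toList)
    (e1 : l1.Pairwise (fun i j => ¬ hb j i))
    (e2 : l2.Pairwise (fun i j => ¬ hb j i))
    (s0 : S) :
    l1.foldl (fun s i => f i s) s0 = l2.foldl (fun s i => f i s) s0 :=
  crdt_convergence_general V f hb hcomm l1 l2 h1 h2 e1 e2 s0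
end

section
/- Any two linear extensions of a partial order on a finite set are connected by a sequence of adjacent transpositions of incomparable elements: if L1 and L2 are both enumerations of a finite set V compatible with a strict partial order ≺, then L2 can be obtained from L1 by finitely many swaps of adjacent elements x, y with neither x ≺ y nor y ≺ x, with every intermediate list also a linear extension of ≺. -/
/-- `l` is a linear extension of `≺` enumerating the finite set `V`. -/
def IsLinExt {ι : Type} [DecidableEq ι] (V : Finset ι) (prec : ι → ι → Prop)
    (l : List ι) : Prop :=
  l.Perm V.toList ∧ l.Pairwise (fun x y => ¬ prec y x)

/-- One adjacent transposition of two incomparable elements, landing on a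
    linear extension. -/
def SwapStep {ι : Type} [DecidableEq ι] (V : Finset ι) (prec : ι → ι → Prop)
    (l l' : List ι) : Prop :=
  (∃ l1 x y l2, l = l1 ++ x :: y :: l2 ∧ l' = l1 ++ y :: x :: l2 ∧
      ¬ prec x y ∧ ¬ prec y x) ∧
  IsLinExt V prec l'

/-!
Induct on the target extension `a :: t`. Its head `a` is minimal, so nothing placed before `a`
in the source extension is comparable with `a`; adjacent swaps therefore bubble `a` to the front.
Both tails are then linear extensions of `V.erase a`, and the induction hypothesis connects them
below the fixed head `a`, which stays admissible because `a` is minimal.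
-/

theorem Finset.toList_erase_perm {α : Type*} [DecidableEq α] (s : Finset α) (a : α) :
    (s.erase a).toList.Perm (s.toList.erase a) := by
  rw [← Multiset.coe_eq_coe, ← Multiset.coe_erase]
  simp only [Finset.coe_toList, Finset.erase_val]

theorem List.Pairwise.swap_of_rel {α : Type*} {R : α → α → Prop} {u v : List α} {x y : α}
    (h : (u ++ x :: y :: v).Pairwise R) (hyx : R y x) :
    (u ++ y :: x :: v).Pairwise R := by
  simp only [List.pairwise_append, List.pairwise_cons, List.mem_cons] at h ⊢
  grind

section

variable {ι : Type} [DecidableEq ι] {V : Finset ι} {prec : ι → ι → Prop}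

theorem IsLinExt.tail {a : ι} {t : List ι} (h : IsLinExt V prec (a :: t)) :
    IsLinExt (V.erase a) prec t := by
  have hperm : t.Perm (V.toList.erase a) := by simpa using h.1.erase a
  exact ⟨hperm.trans (V.toList_erase_perm a).symm, h.2.of_cons⟩

theorem IsLinExt.cons {a : ι} {t : List ι} (h : IsLinExt (V.erase a) prec t) (ha : a ∈ V)
    (hmin : ∀ y ∈ V.erase a, ¬ prec y a) : IsLinExt V prec (a :: t) := by
  refine ⟨?_, List.Pairwise.cons (fun y hy => hmin y ?_) h.2⟩
  · exact ((h.1.trans (V.toList_erase_perm a)).cons a).trans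
      (List.perm_cons_erase (Finset.mem_toList.2 ha)).symm
  · exact Finset.mem_toList.1 (h.1.mem_iff.1 hy)

theorem IsLinExt.of_reflTransGen {l l' : List ι} (h : IsLinExt V prec l)
    (hl : Relation.ReflTransGen (SwapStep V prec) l l') : IsLinExt V prec l' := by
  cases hl with
  | refl => exact h
  | tail _ hstep => exact hstep.2

theorem swapStep_of_incomparable {u v : List ι} {x y : ι}
    (h : IsLinExt V prec (u ++ x :: y :: v)) (hxy : ¬ prec x y) (hyx : ¬ prec y x) :
    SwapStep V prec (u ++ x :: y :: v) (u ++ y :: x :: v) :=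
  ⟨⟨u, x, y, v, rfl, rfl, hxy, hyx⟩,
    ((List.Perm.swap x y v).append_left u).trans h.1, h.2.swap_of_rel hxy⟩

theorem SwapStep.cons {a : ι} {t t' : List ι} (h : SwapStep (V.erase a) prec t t') (ha : a ∈ V)
    (hmin : ∀ y ∈ V.erase a, ¬ prec y a) : SwapStep V prec (a :: t) (a :: t') := by
  obtain ⟨⟨u, x, y, v, rfl, rfl, hxy, hyx⟩, hlin⟩ := h
  exact ⟨⟨a :: u, x, y, v, rfl, rfl, hxy, hyx⟩, hlin.cons ha hmin⟩

theorem reflTransGen_swapStep_cons {a : ι} {t t' : List ι}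
    (h : Relation.ReflTransGen (SwapStep (V.erase a) prec) t t') (ha : a ∈ V)
    (hmin : ∀ y ∈ V.erase a, ¬ prec y a) :
    Relation.ReflTransGen (SwapStep V prec) (a :: t) (a :: t') :=
  h.lift (a :: ·) fun _ _ hstep => hstep.cons ha hmin

/-- The other half of incomparability, `¬ prec a x` for `x ∈ p`, comes from `h`. -/
theorem reflTransGen_swapStep_moveToFront {a : ι} {p q : List ι}
    (h : IsLinExt V prec (p ++ a :: q)) (hp : ∀ x ∈ p, ¬ prec x a) :
    Relation.ReflTransGen (SwapStep V prec) (p ++ a :: q) (a :: (p ++ q)) := by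
  induction p using List.reverseRecOn generalizing q with
  | nil => exact .refl
  | append_singleton p b ih =>
    rw [List.append_assoc, List.singleton_append] at h ⊢
    have hab : ¬ prec a b :=
      List.rel_of_pairwise_cons (List.pairwise_append.1 h.2).2.1 List.mem_cons_self
    have hstep := swapStep_of_incomparable h (hp b (by simp)) hab
    have hrest := ih hstep.2 fun x hx => hp x (by simp [hx])
    simpa using hrest.head hstep

theorem reflTransGen_swapStep_cons_erase {a : ι} {l : List ι} (h : IsLinExt V prec l)
    (ha : a ∈ V) (hmin : ∀ y ∈ V.erase a, ¬ prec y a) :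
    Relation.ReflTransGen (SwapStep V prec) l (a :: l.erase a) := by
  obtain ⟨p, q, hap, rfl, herase⟩ :=
    List.exists_erase_eq (h.1.mem_iff.2 (Finset.mem_toList.2 ha))
  rw [herase]
  refine reflTransGen_swapStep_moveToFront h fun x hx => hmin x (Finset.mem_erase.2 ⟨?_, ?_⟩)
  · rintro rfl
    exact hap hx
  · exact Finset.mem_toList.1 (h.1.mem_iff.1 (by simp [hx]))

end

theorem linext_connected_general {ι : Type} [DecidableEq ι]
    (V : Finset ι) (prec : ι → ι → Prop)
    (l1 l2 : List ι)
    (h1 : IsLinExt V prec l1) (h2 : IsLinExt V prec l2) :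
    Relation.ReflTransGen (SwapStep V prec) l1 l2 := by
  induction l2 generalizing V l1 with
  | nil =>
    rw [(h1.1.trans h2.1.symm).eq_nil]
  | cons a t ih =>
    have ha : a ∈ V := Finset.mem_toList.1 (h2.1.subset List.mem_cons_self)
    have hmin : ∀ y ∈ V.erase a, ¬ prec y a := fun y hy =>
      List.rel_of_pairwise_cons h2.2 (h2.tail.1.mem_iff.2 (Finset.mem_toList.2 hy))
    have hfront := reflTransGen_swapStep_cons_erase h1 ha hmin
    have htail := (h1.of_reflTransGen hfront).tail
    exact hfront.trans (reflTransGen_swapStep_cons (ih _ _ htail h2.tail) ha hmin)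

/-- Any two linear extensions of a strict partial order on a finite set are
    connected by adjacent transpositions of incomparable elements, all
    intermediate lists being linear extensions. -/
theorem linext_connected {ι : Type} [DecidableEq ι]
    (V : Finset ι) (prec : ι → ι → Prop)
    (hirr : ∀ x, ¬ prec x x)
    (htrans : ∀ x y z, prec x y → prec y z → prec x z)
    (l1 l2 : List ι)
    (h1 : IsLinExt V prec l1) (h2 : IsLinExt V prec l2) :
    Relation.ReflTransGen (SwapStep V prec) l1 l2 :=
  linext_connected_general V prec l1 l2 h1 h2
end

section
/- In any schedule (linear extension of happens-before), if an insert and a delete refer to the same unique identifier u, then the insert of u appears before the delete of u, given that a delete of u may only be initiated at a site whose current state contains a binding for u, and only inserts create bindings. -/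
/-- Edit operations on the abstract atom buffer. -/
inductive Op (U A : Type) : Type
  | ins (u : U) (a : A) : Op U A
  | del (u : U) : Op U A

/-- Semantics: states are finite-support maps from uids to optional atoms. -/
def applyOp {U A : Type} [DecidableEq U] (o : Op U A) (s : U → Option A) :
    U → Option A :=
  match o with
  | .ins u a => Function.update s u (some a)
  | .del u => Function.update s u none

/-!
Only an insert of `u` creates a binding for `u`, so the state the initiator of `delete u` had
reached contains an insert of `u` among the operations it had executed; by uniqueness this is
`i`, which therefore happens before `d`. A linear extension of happens-before cannot list `d`
before `i`.
-/

theorem applyOp_ne_none {U A : Type} [DecidableEq U] {o : Op U A} {s : U → Option A} {u : U}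
    (h : applyOp o s u ≠ none) : s u ≠ none ∨ ∃ a, o = .ins u a := by
  cases o with
  | ins v a =>
    by_cases hv : v = u
    · exact .inr ⟨a, by rw [hv]⟩
    · exact .inl (by rwa [applyOp, Function.update_of_ne (Ne.symm hv)] at h)
  | del v =>
    by_cases hv : v = u
    · simp [applyOp, hv] at h
    · exact .inl (by rwa [applyOp, Function.update_of_ne (Ne.symm hv)] at h)

theorem exists_ins_of_foldl_applyOp_ne_none {U A ι : Type} [DecidableEq U] (op : ι → Op U A)
    {u : U} (P : List ι) {s : U → Option A}
    (h : (P.foldl (fun s j => applyOp (op j) s) s) u ≠ none) :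
    s u ≠ none ∨ ∃ j ∈ P, ∃ a, op j = .ins u a := by
  induction P generalizing s with
  | nil => exact .inl h
  | cons j P ih =>
    rcases ih h with h | ⟨k, hk, hins⟩
    · exact (applyOp_ne_none h).imp id fun hj => ⟨j, List.mem_cons_self, hj⟩
    · exact .inr ⟨k, List.mem_cons_of_mem _ hk, hins⟩

theorem List.pair_sublist_of_pairwise_not_rel {ι : Type} {r : ι → ι → Prop} :
    ∀ {l : List ι}, l.Pairwise (fun x y => ¬ r y x) → ∀ {x y : ι}, x ∈ l → y ∈ l → x ≠ y →
      r x y → [x, y].Sublist l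
  | [], _, _, _, hx, _, _, _ => absurd hx List.not_mem_nil
  | a :: l, hl, x, y, hx, hy, hxy, hr => by
    rw [List.pairwise_cons] at hl
    rcases List.mem_cons.1 hx with rfl | hxl <;> rcases List.mem_cons.1 hy with rfl | hyl
    · exact absurd rfl hxy
    · exact (List.singleton_sublist.2 hyl).cons_cons x
    · exact absurd hr (hl.1 x hxl)
    · exact (pair_sublist_of_pairwise_not_rel hl.2 hxl hyl hxy hr).cons a

theorem insert_before_delete_general {U A ι : Type} [DecidableEq U]
    (op : ι → Op U A) (hb : ι → ι → Prop)
    (l : List ι)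
    (hext : l.Pairwise (fun x y => ¬ hb y x))
    (u : U) (i d : ι) (hi : i ∈ l) (hd : d ∈ l)
    (hopd : op d = Op.del u)
    (huniq : ∀ j ∈ l, (∃ a : A, op j = Op.ins u a) ↔ j = i)
    (P : List ι)
    (hPhb : ∀ j ∈ P, hb j d)
    (hPmem : ∀ j ∈ P, j ∈ l)
    (hpre : (P.foldl (fun s j => applyOp (op j) s) (fun _ => none)) u ≠ none) :
    [i, d].Sublist l := by
  obtain ⟨j, hjP, a, hja⟩ :=
    (exists_ins_of_foldl_applyOp_ne_none op P hpre).resolve_left (by simp)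
  obtain rfl : j = i := (huniq j (hPmem j hjP)).1 ⟨a, hja⟩
  have hjd : j ≠ d := by
    rintro rfl
    rw [hopd] at hja
    cases hja
  exact List.pair_sublist_of_pairwise_not_rel hext hi hd hjd (hPhb j hjP)

/-- In any schedule (a linear extension of happens-before), the insert of `u`
    appears before any delete of `u`, given that the delete's initiator had
    executed a happens-before-prior prefix whose state contains `u`, and `u`
    is inserted by exactly one insert operation. -/
theorem insert_before_delete {U A ι : Type} [DecidableEq U] [DecidableEq ι]
    (op : ι → Op U A) (hb : ι → ι → Prop)
    (l : List ι) (hnodup : l.Nodup)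
    (hext : l.Pairwise (fun x y => ¬ hb y x))
    (u : U) (i d : ι) (hi : i ∈ l) (hd : d ∈ l)
    (hopd : op d = Op.del u)
    (huniq : ∀ j ∈ l, (∃ a : A, op j = Op.ins u a) ↔ j = i)
    (P : List ι)
    (hPhb : ∀ j ∈ P, hb j d)
    (hPmem : ∀ j ∈ P, j ∈ l)
    (hpre : (P.foldl (fun s j => applyOp (op j) s) (fun _ => none)) u ≠ none) :
    [i, d].Sublist l :=
  insert_before_delete_general op hb l hext u i d hi hd hopd huniq P hPhb hPmem hpre
end

section
/- Extending the convergence theorem with a common suffix: under the hypotheses of the CRDT convergence theorem, if O and O' partition the operation set such that no operation of O' happens-before any operation of O, and every op in O either happens-before or is concurrent with every op in O', then every schedule's final state equals the final state of some schedule executing all of O first and then all of O'; hence all schedules share the state reached after the O-prefix up to equivalence. -/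
/-!
Two linear extensions of the same happens-before order give the same final state: the first
operation `a` of one schedule sits somewhere in the other, and every operation that precedes
it there is concurrent with it, so `a` can be commuted to the front; induct on the rest.
Filtering a schedule to `O` and to `O'` keeps it a linear extension, and since nothing in `O'`
happens before anything in `O`, the concatenation of the two filtered lists is again a linear
extension of all of `V`. Convergence then identifies the final state of the schedule with that
of the concatenation, and the `O`-prefixes of any two schedules with each other.
-/

namespace List

variable {S ι : Type*}

theorem foldl_append_cons_eq_of_commute (f : ι → S → S) (a : ι) (u v : List ι)
    (hcomm : ∀ b ∈ u, f b ∘ f a = f a ∘ f b) (s : S) :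
    (u ++ a :: v).foldl (fun s i => f i s) s = (u ++ v).foldl (fun s i => f i s) (f a s) := by
  induction u generalizing s with
  | nil => rfl
  | cons b u ih =>
    have hba : f b (f a s) = f a (f b s) := congrFun (hcomm b mem_cons_self) s
    simp only [cons_append, foldl_cons]
    rw [ih (fun c hc => hcomm c (mem_cons_of_mem b hc)), hba]

theorem Perm.foldl_eq_of_pairwise_s19 (f : ι → S → S) {r : ι → ι → Prop} {l₁ l₂ : List ι}
    (hp : l₁.Perm l₂) (h₁ : l₁.Pairwise r) (h₂ : l₂.Pairwise r)
    (hcomm : ∀ i ∈ l₁, ∀ j ∈ l₁, r i j → r j i → f i ∘ f j = f j ∘ f i) (s : S) :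
    l₁.foldl (fun s i => f i s) s = l₂.foldl (fun s i => f i s) s := by
  induction l₁ generalizing l₂ s with
  | nil => rw [hp.symm.eq_nil]
  | cons a t ih =>
    obtain ⟨u, v, rfl⟩ := append_of_mem (hp.subset mem_cons_self)
    have htuv : t.Perm (u ++ v) := (hp.trans perm_middle).cons_inv
    have hcomm_a : ∀ b ∈ u, f b ∘ f a = f a ∘ f b := by
      intro b hbu
      by_cases hba : b = a
      · rw [hba]
      have hbt : b ∈ t := (mem_cons.mp (hp.symm.subset (mem_append_left _ hbu))).resolve_left hba
      exact hcomm b (mem_cons_of_mem a hbt) a mem_cons_self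
        ((pairwise_append.mp h₂).2.2 b hbu a mem_cons_self) ((pairwise_cons.mp h₁).1 b hbt)
    rw [foldl_append_cons_eq_of_commute f a u v hcomm_a, foldl_cons]
    exact ih htuv (pairwise_cons.mp h₁).2 (h₂.sublist ((sublist_cons_self a v).append_left u))
      (fun i hi j hj => hcomm i (mem_cons_of_mem a hi) j (mem_cons_of_mem a hj)) (f a s)

theorem Pairwise.filter_append_filter {r : ι → ι → Prop} {l : List ι} (h : l.Pairwise r)
    (p q : ι → Bool) (hpq : ∀ i, p i → ∀ j, q j → r i j) :
    (l.filter p ++ l.filter q).Pairwise r :=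
  pairwise_append.mpr ⟨h.filter p, h.filter q, fun i hi j hj =>
    hpq i (mem_filter.mp hi).2 j (mem_filter.mp hj).2⟩

theorem Perm.filter_mem_perm_toList [DecidableEq ι] {l : List ι} {V W : Finset ι}
    (hl : l.Perm V.toList) (hWV : W ⊆ V) : (l.filter (· ∈ W)).Perm W.toList := by
  have hnodup : l.Nodup := hl.nodup_iff.mpr V.nodup_toList
  refine (perm_ext_iff_of_nodup (hnodup.filter _) W.nodup_toList).mpr fun a => ?_
  simp only [mem_filter, hl.mem_iff, Finset.mem_toList, decide_eq_true_eq]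
  exact ⟨And.right, fun ha => ⟨hWV ha, ha⟩⟩

theorem Perm.filter_append_filter_perm_of_disjoint [DecidableEq ι] {l : List ι}
    {O O' : Finset ι} (hl : l.Perm (O ∪ O').toList) (hdisj : _root_.Disjoint O O') :
    (l.filter (· ∈ O) ++ l.filter (· ∈ O')).Perm l := by
  have hcompl : ∀ a ∈ l, decide (a ∈ O') = !decide (a ∈ O) := by
    intro a ha
    have haOO' := Finset.mem_union.mp (Finset.mem_toList.mp (hl.subset ha))
    by_cases haO : a ∈ O
    · simp [haO, Finset.disjoint_left.mp hdisj haO]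
    · simp [haO, haOO'.resolve_left haO]
  rw [filter_congr hcompl]
  exact filter_append_perm _ l

end List

theorem crdt_convergence_prefix_general {S ι : Type} [DecidableEq ι]
    (V O O' : Finset ι) (f : ι → S → S) (hb : ι → ι → Prop)
    (hcomm : ∀ i ∈ V, ∀ j ∈ V, ¬ hb i j → ¬ hb j i →
      (f i) ∘ (f j) = (f j) ∘ (f i))
    (hdisj : Disjoint O O') (hunion : O ∪ O' = V)
    (hsplit : ∀ o' ∈ O', ∀ o ∈ O, ¬ hb o' o)
    (s0 : S) :
    ∃ sO : S,
      ∀ l : List ι, l.Perm V.toList → l.Pairwise (fun i j => ¬ hb j i) →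
        ∃ lO lO' : List ι,
          lO.Perm O.toList ∧ lO'.Perm O'.toList ∧
          (lO ++ lO').Pairwise (fun i j => ¬ hb j i) ∧
          lO.foldl (fun s i => f i s) s0 = sO ∧
          l.foldl (fun s i => f i s) s0 =
            (lO ++ lO').foldl (fun s i => f i s) s0 := by
  subst hunion
  have hcommOn : ∀ l : List ι, (∀ i ∈ l, i ∈ O ∪ O') → ∀ i ∈ l, ∀ j ∈ l,
      ¬ hb j i → ¬ hb i j → f i ∘ f j = f j ∘ f i :=
    fun l hl i hi j hj hji hij => hcomm i (hl i hi) j (hl j hj) hij hji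
  have hsorted : ∀ l : List ι, l.Pairwise (fun i j => ¬ hb j i) →
      (l.filter (· ∈ O) ++ l.filter (· ∈ O')).Pairwise (fun i j => ¬ hb j i) :=
    fun l hl => hl.filter_append_filter _ _ fun i hi j hj => hsplit j (by simpa using hj) i
      (by simpa using hi)
  by_cases hsched : ∃ l₀ : List ι, l₀.Perm (O ∪ O').toList ∧ l₀.Pairwise (fun i j => ¬ hb j i)
  · obtain ⟨l₀, hl₀, hl₀_sorted⟩ := hsched
    refine ⟨(l₀.filter (· ∈ O)).foldl (fun s i => f i s) s0, fun l hl hl_sorted =>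
      ⟨l.filter (· ∈ O), l.filter (· ∈ O'), hl.filter_mem_perm_toList Finset.subset_union_left,
        hl.filter_mem_perm_toList Finset.subset_union_right, hsorted l hl_sorted, ?_, ?_⟩⟩
    · have hOO : (l.filter (· ∈ O)).Perm (l₀.filter (· ∈ O)) :=
        (hl.filter_mem_perm_toList Finset.subset_union_left).trans
          (hl₀.filter_mem_perm_toList Finset.subset_union_left).symm
      exact hOO.foldl_eq_of_pairwise_s19 f (hl_sorted.filter _) (hl₀_sorted.filter _)
        (hcommOn _ fun i hi => Finset.mem_union_left _ (by simpa using (List.mem_filter.mp hi).2))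
        s0
    · exact (hl.filter_append_filter_perm_of_disjoint hdisj).symm.foldl_eq_of_pairwise_s19 f
        hl_sorted (hsorted l hl_sorted)
        (hcommOn l fun i hi => Finset.mem_toList.mp (hl.subset hi)) s0
  · exact ⟨s0, fun l hl hl_sorted => absurd ⟨l, hl, hl_sorted⟩ hsched⟩

/-- Convergence with a common prefix: if `V = O ⊎ O'` and no operation of `O'`
    happens-before any operation of `O`, then every schedule's final state is
    that of a schedule executing all of `O` first and then all of `O'`;
    moreover the state reached after the `O`-prefix is the same for all
    schedules. -/
theorem crdt_convergence_prefix {S ι : Type} [DecidableEq ι]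
    (V O O' : Finset ι) (f : ι → S → S) (hb : ι → ι → Prop)
    (hirr : ∀ i, ¬ hb i i)
    (htrans : ∀ i j k, hb i j → hb j k → hb i k)
    (hcomm : ∀ i ∈ V, ∀ j ∈ V, ¬ hb i j → ¬ hb j i →
      (f i) ∘ (f j) = (f j) ∘ (f i))
    (hdisj : Disjoint O O') (hunion : O ∪ O' = V)
    (hsplit : ∀ o' ∈ O', ∀ o ∈ O, ¬ hb o' o)
    (s0 : S) :
    ∃ sO : S,
      ∀ l : List ι, l.Perm V.toList → l.Pairwise (fun i j => ¬ hb j i) →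
        ∃ lO lO' : List ι,
          lO.Perm O.toList ∧ lO'.Perm O'.toList ∧
          (lO ++ lO').Pairwise (fun i j => ¬ hb j i) ∧
          lO.foldl (fun s i => f i s) s0 = sO ∧
          l.foldl (fun s i => f i s) s0 =
            (lO ++ lO').foldl (fun s i => f i s) s0 :=
  crdt_convergence_prefix_general V O O' f hb hcomm hdisj hunion hsplit s0
end
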